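/- The translation S from suspension terms to λσ-terms is injective (one-to-one). -/
import Mathlib


mutual
inductive STerm : Type
  | const : ℕ → STerm
  | var   : ℕ → STerm
  | app   : STerm → STerm → STerm
  | lam   : STerm → STerm
  | susp  : STerm → ℕ → ℕ → SEnv → STerm
inductive SEnv : Type
  | nil   : SEnv
  | cons  : STerm → ℕ → SEnv → SEnv
  | merge : SEnv → ℕ → ℕ → SEnv → SEnv
end

/-- Length of an environment. -/
def SEnv.len : SEnv → ℕ
  | .nil => 0
  | .cons _ _ e => 1 + e.len
  | .merge e1 nl1 ol2 _ => e1.len + (ol2 - nl1)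

/-- Level of an environment. -/
def SEnv.lev : SEnv → ℕ
  | .nil => 0
  | .cons _ n _ => n
  | .merge _ nl1 ol2 e2 => e2.lev + (nl1 - ol2)

mutual
/-- Well-formedness of suspension terms. -/
def STerm.wf : STerm → Prop
  | .const _ => True
  | .var _ => True
  | .app t1 t2 => t1.wf ∧ t2.wf
  | .lam t => t.wf
  | .susp t ol nl e => t.wf ∧ e.wf ∧ e.len = ol ∧ e.lev ≤ nl
/-- Well-formedness of suspension environments. -/
def SEnv.wf : SEnv → Prop
  | .nil => True
  | .cons t n e => t.wf ∧ e.wf ∧ e.lev ≤ n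
  | .merge e1 nl1 ol2 e2 => e1.wf ∧ e2.wf ∧ e2.len = ol2 ∧ e1.lev ≤ nl1
end

/-- A simple environment: no merged environments on the top spine. -/
def SEnv.simple : SEnv → Prop
  | .nil => True
  | .cons _ _ e => e.simple
  | .merge _ _ _ _ => False


mutual
/-- λσ-terms (extended with constants). -/
inductive LsgTm : Type
  | const : ℕ → LsgTm
  | one   : LsgTm                     -- the de Bruijn index 1
  | app   : LsgTm → LsgTm → LsgTm
  | lam   : LsgTm → LsgTm
  | clos  : LsgTm → LsgSub → LsgTm    -- a[s]
/-- λσ-substitutions. -/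
inductive LsgSub : Type
  | id    : LsgSub
  | shift : LsgSub                    -- ↑
  | cons  : LsgTm → LsgSub → LsgSub   -- a · s
  | comp  : LsgSub → LsgSub → LsgSub  -- s ∘ t
end

/-- `shifts s j` = (…((s ∘ ↑) ∘ ↑) ∘ … ∘ ↑) with j shifts, left-associated. -/
def shifts : LsgSub → ℕ → LsgSub
  | s, 0 => s
  | s, j + 1 => .comp (shifts s j) .shift

/-- `upPow n` = ↑^(n+1), left-associated. -/
def upPow : ℕ → LsgSub
  | 0 => .shift
  | k + 1 => .comp (upPow k) .shift

mutual
/-- Translation S from suspension terms to λσ-terms.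
Here `STerm.var n` denotes the de Bruijn index n+1 (so indices are positive). -/
def Ssg : STerm → LsgTm
  | .const c => .const c
  | .var 0 => .one
  | .var (n + 1) => .clos .one (upPow n)
  | .app a b => .app (Ssg a) (Ssg b)
  | .lam a => .lam (Ssg a)
  | .susp t _ nl e => .clos (Ssg t) (Rsg e nl)
/-- Translation R from a suspension environment and an embedding level
to a λσ-substitution. -/
def Rsg : SEnv → ℕ → LsgSub
  | .nil, j => shifts .id j
  | .cons t n e, j => shifts (.cons (Ssg t) (Rsg e n)) (j - n)
  | .merge e1 nl1 ol2 e2, j => .comp (Rsg e1 nl1) (Rsg e2 (j - (nl1 - ol2)))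
end


/-- `s` is not of the form `t ∘ ↑`. -/
def notCS (s : LsgSub) : Prop := ∀ a, s ≠ .comp a .shift

theorem notCS_id : notCS .id := fun _ h => by cases h
theorem notCS_shift : notCS .shift := fun _ h => by cases h
theorem notCS_cons (a : LsgTm) (s : LsgSub) : notCS (.cons a s) := fun _ h => by cases h
theorem notCS_comp {b : LsgSub} (hb : b ≠ .shift) (a : LsgSub) : notCS (.comp a b) := by
  intro a' h
  injection h with _ h2
  exact hb h2

theorem shifts_inj {s s' : LsgSub} (hs : notCS s) (hs' : notCS s') :
    ∀ k k', shifts s k = shifts s' k' → s = s' ∧ k = k' := by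
  intro k
  induction k with
  | zero =>
    intro k' h
    cases k' with
    | zero => exact ⟨h, rfl⟩
    | succ m => simp only [shifts] at h; exact absurd h (hs _)
  | succ n ih =>
    intro k' h
    cases k' with
    | zero => simp only [shifts] at h; exact absurd h.symm (hs' _)
    | succ m =>
      simp only [shifts, LsgSub.comp.injEq] at h
      obtain ⟨hss, hk⟩ := ih m h.1
      exact ⟨hss, by omega⟩

theorem rsg_ne_shift : ∀ (e : SEnv) (j : ℕ), Rsg e j ≠ .shift := by
  intro e j
  cases e with
  | nil => cases j <;> simp [Rsg, shifts]
  | cons t n f => simp only [Rsg]; cases h : j - n <;> simp [shifts]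
  | merge f1 nl1 ol2 f2 => simp [Rsg]

theorem upPow_eq_shifts : ∀ n, upPow n = shifts .shift n
  | 0 => rfl
  | n + 1 => by simp only [upPow, shifts, upPow_eq_shifts n]

theorem upPow_inj {n m : ℕ} (h : upPow n = upPow m) : n = m := by
  rw [upPow_eq_shifts, upPow_eq_shifts] at h
  exact (shifts_inj notCS_shift notCS_shift _ _ h).2

theorem rsg_ne_upPow (e : SEnv) (j n : ℕ) : Rsg e j ≠ upPow n := by
  rw [upPow_eq_shifts]
  cases e with
  | nil =>
    intro h
    exact absurd (shifts_inj notCS_id notCS_shift _ _ h).1 (fun hh => by cases hh)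
  | cons t m f =>
    intro h
    exact absurd (shifts_inj (notCS_cons _ _) notCS_shift _ _ h).1 (fun hh => by cases hh)
  | merge f1 nl1 ol2 f2 =>
    intro h
    have h' : shifts ((Rsg f1 nl1).comp (Rsg f2 (j - (nl1 - ol2)))) 0 = shifts .shift n := h
    exact absurd (shifts_inj (notCS_comp (rsg_ne_shift _ _) _) notCS_shift _ _ h').1
      (fun hh => by cases hh)

mutual
theorem ssg_inj : ∀ (t t' : STerm), t.wf → t'.wf → Ssg t = Ssg t' → t = t'
  | .const c, t', _, _, h => by
    cases t' with
    | const c' => simp only [Ssg, LsgTm.const.injEq] at h; rw [h]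
    | var m => cases m <;> simp [Ssg] at h
    | app _ _ => simp [Ssg] at h
    | lam _ => simp [Ssg] at h
    | susp _ _ _ _ => simp [Ssg] at h
  | .var 0, t', _, _, h => by
    cases t' with
    | const c' => simp [Ssg] at h
    | var m =>
      cases m with
      | zero => rfl
      | succ m => simp [Ssg] at h
    | app _ _ => simp [Ssg] at h
    | lam _ => simp [Ssg] at h
    | susp _ _ _ _ => simp [Ssg] at h
  | .var (n + 1), t', _, _, h => by
    cases t' with
    | const c' => simp [Ssg] at h
    | var m =>
      cases m with
      | zero => simp [Ssg] at h
      | succ m =>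
        simp only [Ssg, LsgTm.clos.injEq] at h
        rw [upPow_inj h.2]
    | app _ _ => simp [Ssg] at h
    | lam _ => simp [Ssg] at h
    | susp u ol nl e =>
      simp only [Ssg, LsgTm.clos.injEq] at h
      exact absurd h.2.symm (rsg_ne_upPow e nl n)
  | .app a b, t', hw, hw', h => by
    cases t' with
    | const c' => simp [Ssg] at h
    | var m => cases m <;> simp [Ssg] at h
    | app a' b' =>
      simp only [Ssg, LsgTm.app.injEq] at h
      have w : a.wf ∧ b.wf := hw
      have w' : a'.wf ∧ b'.wf := hw'
      rw [ssg_inj a a' w.1 w'.1 h.1, ssg_inj b b' w.2 w'.2 h.2]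
    | lam _ => simp [Ssg] at h
    | susp _ _ _ _ => simp [Ssg] at h
  | .lam a, t', hw, hw', h => by
    cases t' with
    | const c' => simp [Ssg] at h
    | var m => cases m <;> simp [Ssg] at h
    | app _ _ => simp [Ssg] at h
    | lam a' =>
      simp only [Ssg, LsgTm.lam.injEq] at h
      have w : a.wf := hw
      have w' : a'.wf := hw'
      rw [ssg_inj a a' w w' h]
    | susp _ _ _ _ => simp [Ssg] at h
  | .susp u ol nl e, t', hw, hw', h => by
    cases t' with
    | const c' => simp [Ssg] at h
    | var m =>
      cases m with
      | zero => simp [Ssg] at h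
      | succ m =>
        simp only [Ssg, LsgTm.clos.injEq] at h
        exact absurd h.2 (rsg_ne_upPow e nl m)
    | app _ _ => simp [Ssg] at h
    | lam _ => simp [Ssg] at h
    | susp u' ol' nl' e' =>
      simp only [Ssg, LsgTm.clos.injEq] at h
      have w : u.wf ∧ e.wf ∧ e.len = ol ∧ e.lev ≤ nl := hw
      have w' : u'.wf ∧ e'.wf ∧ e'.len = ol' ∧ e'.lev ≤ nl' := hw'
      obtain ⟨he, hn⟩ := rsg_inj e e' nl nl' w.2.1 w'.2.1 w.2.2.2 w'.2.2.2 h.2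
      have hol : ol = ol' := by rw [← w.2.2.1, ← w'.2.2.1, he]
      rw [ssg_inj u u' w.1 w'.1 h.1, he, hn, hol]
termination_by t _ _ _ _ => sizeOf t

theorem rsg_inj : ∀ (e e' : SEnv) (j j' : ℕ), e.wf → e'.wf → e.lev ≤ j → e'.lev ≤ j' →
    Rsg e j = Rsg e' j' → e = e' ∧ j = j'
  | .nil, e', j, j', _, hw', _, _, h => by
    cases e' with
    | nil =>
      simp only [Rsg] at h
      exact ⟨rfl, (shifts_inj notCS_id notCS_id _ _ h).2⟩
    | cons t' n' f' =>
      simp only [Rsg] at h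
      exact absurd (shifts_inj notCS_id (notCS_cons _ _) _ _ h).1 (fun hh => by cases hh)
    | merge g1 m1 p2 g2 =>
      simp only [Rsg] at h
      have h' : shifts .id j = shifts ((Rsg g1 m1).comp (Rsg g2 (j' - (m1 - p2)))) 0 := h
      exact absurd (shifts_inj notCS_id (notCS_comp (rsg_ne_shift _ _) _) _ _ h').1
        (fun hh => by cases hh)
  | .cons t n f, e', j, j', hw, hw', hl, hl', h => by
    cases e' with
    | nil =>
      simp only [Rsg] at h
      exact absurd (shifts_inj (notCS_cons _ _) notCS_id _ _ h).1 (fun hh => by cases hh)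
    | cons t' n' f' =>
      simp only [Rsg] at h
      have w : t.wf ∧ f.wf ∧ f.lev ≤ n := hw
      have w' : t'.wf ∧ f'.wf ∧ f'.lev ≤ n' := hw'
      obtain ⟨hh, hk⟩ := shifts_inj (notCS_cons _ _) (notCS_cons _ _) _ _ h
      injection hh with ht hr
      obtain ⟨hf, hn⟩ := rsg_inj f f' n n' w.2.1 w'.2.1 w.2.2 w'.2.2 hr
      have hjn : n ≤ j := hl
      have hjn' : n' ≤ j' := hl'
      refine ⟨?_, by omega⟩
      rw [ssg_inj t t' w.1 w'.1 ht, hf, hn]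
    | merge g1 m1 p2 g2 =>
      simp only [Rsg] at h
      have h' : shifts (LsgSub.cons (Ssg t) (Rsg f n)) (j - n)
          = shifts ((Rsg g1 m1).comp (Rsg g2 (j' - (m1 - p2)))) 0 := h
      exact absurd (shifts_inj (notCS_cons _ _) (notCS_comp (rsg_ne_shift _ _) _) _ _ h').1
        (fun hh => by cases hh)
  | .merge f1 nl1 ol2 f2, e', j, j', hw, hw', hl, hl', h => by
    cases e' with
    | nil =>
      simp only [Rsg] at h
      have h' : shifts ((Rsg f1 nl1).comp (Rsg f2 (j - (nl1 - ol2)))) 0 = shifts .id j' := h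
      exact absurd (shifts_inj (notCS_comp (rsg_ne_shift _ _) _) notCS_id _ _ h').1
        (fun hh => by cases hh)
    | cons t' n' f' =>
      simp only [Rsg] at h
      have h' : shifts ((Rsg f1 nl1).comp (Rsg f2 (j - (nl1 - ol2)))) 0
          = shifts (LsgSub.cons (Ssg t') (Rsg f' n')) (j' - n') := h
      exact absurd (shifts_inj (notCS_comp (rsg_ne_shift _ _) _) (notCS_cons _ _) _ _ h').1
        (fun hh => by cases hh)
    | merge g1 m1 p2 g2 =>
      simp only [Rsg, LsgSub.comp.injEq] at h
      have w : f1.wf ∧ f2.wf ∧ f2.len = ol2 ∧ f1.lev ≤ nl1 := hw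
      have w' : g1.wf ∧ g2.wf ∧ g2.len = p2 ∧ g1.lev ≤ m1 := hw'
      have hlev : f2.lev + (nl1 - ol2) ≤ j := hl
      have hlev' : g2.lev + (m1 - p2) ≤ j' := hl'
      obtain ⟨he1, hn1⟩ := rsg_inj f1 g1 nl1 m1 w.1 w'.1 w.2.2.2 w'.2.2.2 h.1
      obtain ⟨he2, hn2⟩ := rsg_inj f2 g2 (j - (nl1 - ol2)) (j' - (m1 - p2))
        w.2.1 w'.2.1 (by omega) (by omega) h.2
      have hol : ol2 = p2 := by rw [← w.2.2.1, ← w'.2.2.1, he2]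
      refine ⟨?_, by omega⟩
      rw [he1, hn1, he2, hol]
termination_by e _ _ _ _ _ _ _ _ => sizeOf e
end

/-- the translation S from suspension terms to λσ-terms is injective. -/
theorem stmt17 (t t' : STerm) (h1 : t.wf) (h2 : t'.wf) (h : Ssg t = Ssg t') :
    t = t' :=
  ssg_inj t t' h1 h2 h
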